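/- Let S be a nonempty finite subset of R^n. Then S is exact if and only if there exist finitely many polynomials g_1,...,g_m of degree at most 1 such that conv(S) = {x in R^n : g_i(x) >= 0 for i = 1,...,m} and for each i there is a real number c_i >= 0 with g_i(s) in {0, c_i} for every s in S (i.e., every point of S lies either on the hyperplane g_i = 0 or on a single parallel translate of it). -/

import Mathlib

/-!
Exact ⇒ two-level. Through their values on `S`, the affine functions that are nonnegative on `S`
form the cone `V ∩ ℝ≥0^S`, where `V ⊆ ℝ^S` is the space of restrictions of affine functions. By
Krein–Milman on its slice `∑ = 1`, this cone is generated by finitely many extreme rays, and these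
rays, together with the equations of the affine hull of `S`, cut out `conv S`. An extreme ray `p`
is determined up to a scalar by its zeros on `S`. If `p ≡ ∑ hⱼ²` on `S`, every `hⱼ` vanishes
where `p` does, so `hⱼ = μⱼ p` on `S` and `p = (∑ μⱼ²) p²` on `S`: `p` takes only two values.

Two-level ⇒ exact. By Farkas' lemma, an affine `f ≥ 0` on `conv S = {gᵢ ≥ 0}` agrees on `S` with
`a + ∑ λᵢ gᵢ` for some `a, λᵢ ≥ 0`, and on `S` each `λᵢ gᵢ` is the square `(√(λᵢ / cᵢ) gᵢ)²`.
-/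

open MvPolynomial

/-- `f` is `k`-sos mod `I`: there are polynomials `h_j` of total degree at most `k` with
`f - ∑ j, h_j ^ 2 ∈ I`. -/
def IsKSos {σ : Type*} (I : Ideal (MvPolynomial σ ℝ)) (k : ℕ) (f : MvPolynomial σ ℝ) :
    Prop :=
  ∃ (t : ℕ) (h : Fin t → MvPolynomial σ ℝ),
    (∀ j, (h j).totalDegree ≤ k) ∧ f - ∑ j, h j ^ 2 ∈ I

/-- The `k`-th theta body of an ideal `I`: the set of points where every polynomial of
degree at most 1 that is `k`-sos mod `I` is nonnegative. -/
def thetaBody {σ : Type*} (I : Ideal (MvPolynomial σ ℝ)) (k : ℕ) : Set (σ → ℝ) :=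
  {x | ∀ f : MvPolynomial σ ℝ, f.totalDegree ≤ 1 → IsKSos I k f → 0 ≤ eval x f}

/-- A finite set `S ⊆ ℝ^n` is exact: every polynomial of degree at most 1 that is
nonnegative on `S` is 1-sos mod `I(S)`, the vanishing ideal of `S`. -/
def IsExact {n : ℕ} (S : Set (Fin n → ℝ)) : Prop :=
  ∀ f : MvPolynomial (Fin n) ℝ, f.totalDegree ≤ 1 →
    (∀ s ∈ S, 0 ≤ eval s f) → IsKSos (vanishingIdeal ℝ S) 1 f

open Filter Topology

namespace MvPolynomial

variable {σ R : Type*} [CommRing R]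

theorem exists_linearMap_eval_eq_of_mem_homogeneousSubmodule_one {p : MvPolynomial σ R}
    (hp : p ∈ homogeneousSubmodule σ R 1) : ∃ ℓ : (σ → R) →ₗ[R] R, ∀ x, eval x p = ℓ x := by
  rw [homogeneousSubmodule_one_eq_span_X] at hp
  induction hp using Submodule.span_induction with
  | mem q hq =>
    obtain ⟨i, rfl⟩ := hq
    exact ⟨LinearMap.proj i, fun x => by simp⟩
  | zero => exact ⟨0, fun x => by simp⟩
  | add q r _ _ hq hr =>
    obtain ⟨ℓ, hℓ⟩ := hq
    obtain ⟨ℓ', hℓ'⟩ := hr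
    exact ⟨ℓ + ℓ', fun x => by simp [hℓ, hℓ']⟩
  | smul a q _ hq =>
    obtain ⟨ℓ, hℓ⟩ := hq
    exact ⟨a • ℓ, fun x => by simp [hℓ, smul_eq_C_mul]⟩

theorem exists_linearMap_eval_eq_of_totalDegree_le_one {p : MvPolynomial σ R}
    (hp : p.totalDegree ≤ 1) : ∃ ℓ : (σ → R) →ₗ[R] R, ∀ x, eval x p = ℓ x + coeff 0 p := by
  obtain ⟨ℓ, hℓ⟩ := exists_linearMap_eval_eq_of_mem_homogeneousSubmodule_one
    (homogeneousComponent_isHomogeneous 1 p)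
  refine ⟨ℓ, fun x => ?_⟩
  have hsplit : p = homogeneousComponent 0 p + homogeneousComponent 1 p := by
    conv_lhs => rw [← sum_homogeneousComponent p]
    interval_cases h : p.totalDegree
    · simp [homogeneousComponent_eq_zero 1 p (by omega)]
    · simp [Finset.sum_range_succ]
  rw [congrArg (eval x) hsplit, eval_add, hℓ, homogeneousComponent_zero, eval_C, add_comm]

theorem eval_sum_smul_of_totalDegree_le_one {p : MvPolynomial σ R} (hp : p.totalDegree ≤ 1)
    {ι : Type*} (s : Finset ι) (w : ι → R) (z : ι → σ → R) (hw : ∑ i ∈ s, w i = 1) :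
    eval (∑ i ∈ s, w i • z i) p = ∑ i ∈ s, w i * eval (z i) p := by
  obtain ⟨ℓ, hℓ⟩ := exists_linearMap_eval_eq_of_totalDegree_le_one hp
  simp only [hℓ, map_sum, map_smul, smul_eq_mul, mul_add, Finset.sum_add_distrib,
    ← Finset.sum_mul, hw, one_mul]

theorem convex_setOf_nonneg_eval {p : MvPolynomial σ ℝ} (hp : p.totalDegree ≤ 1) :
    Convex ℝ {x | 0 ≤ eval x p} := by
  intro x hx y hy a b ha hb hab
  have := eval_sum_smul_of_totalDegree_le_one hp Finset.univ ![a, b] ![x, y]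
    (by simpa using hab)
  simp only [Fin.sum_univ_two, Matrix.cons_val_zero, Matrix.cons_val_one] at this
  simp only [Set.mem_ofPred_eq, this] at hx hy ⊢
  positivity

theorem exists_totalDegree_le_one_eval_eq [Fintype σ] (ℓ : (σ → R) →ₗ[R] R) (c : R) :
    ∃ p : MvPolynomial σ R, p.totalDegree ≤ 1 ∧ ∀ x, eval x p = ℓ x + c := by
  classical
  refine ⟨∑ i, ℓ (Pi.single i 1) • X i + C c, ?_, fun x => ?_⟩
  · rw [← mem_restrictTotalDegree]
    refine Submodule.add_mem _ (Submodule.sum_mem _ fun i _ => Submodule.smul_mem _ _ ?_) ?_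
    · rw [mem_restrictTotalDegree]
      exact (totalDegree_monomial_le _ _).trans (by simp)
    · rw [mem_restrictTotalDegree, totalDegree_C]; omega
  · conv_rhs => rw [pi_eq_sum_univ' x]
    simp [smul_eq_C_mul, mul_comm]

end MvPolynomial

section Cone

variable {ι : Type*} [Fintype ι]

theorem exists_nonneg_sum_smul_or_exists_dotProduct_neg {κ : Type*} [Fintype κ]
    {v : κ → ι → ℝ} (hv : ∀ j, 0 ≤ v j) {y : ι → ℝ} (hy : 0 ≤ y) :
    (∃ l : κ → ℝ, 0 ≤ l ∧ y = ∑ j, l j • v j) ∨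
      ∃ μ : ι → ℝ, (∀ j, v j = 0 ∨ 0 < μ ⬝ᵥ v j) ∧ μ ⬝ᵥ y < 0 := by
  classical
  rcases (Finset.sum_nonneg fun k _ => hy k).eq_or_lt with hy0 | hy0
  · exact Or.inl ⟨0, le_rfl, by simp [(Fintype.sum_eq_zero_iff_of_nonneg hy).1 hy0.symm]⟩
  -- Normalizing to the hyperplane `∑ = 1` replaces the cone by a compact convex set `K`,
  -- from which `(∑ y)⁻¹ • y` can be separated.
  set a : κ → ι → ℝ := fun j => (∑ k, v j k)⁻¹ • v j
  set K := Fintype.linearCombination ℝ a '' stdSimplex ℝ κ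
  have hK : IsCompact K :=
    (isCompact_stdSimplex ℝ κ).image (LinearMap.continuous_of_finiteDimensional _)
  by_cases hyK : (∑ k, y k)⁻¹ • y ∈ K
  · obtain ⟨l, hl, hly⟩ := hyK
    refine Or.inl ⟨fun j => (∑ k, y k) * l j * (∑ k, v j k)⁻¹,
      fun j => mul_nonneg (mul_nonneg hy0.le (hl.1 j))
        (inv_nonneg.2 (Finset.sum_nonneg fun k _ => hv j k)), ?_⟩
    rw [Fintype.linearCombination_apply] at hly
    conv_lhs => rw [← smul_inv_smul₀ hy0.ne' y, ← hly]
    simp [a, Finset.smul_sum, smul_smul, mul_assoc]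
  obtain ⟨φ, u, hφK, hφy⟩ := geometric_hahn_banach_closed_point
    ((convex_stdSimplex ℝ κ).linear_image _) hK.isClosed hyK
  have hdot : ∀ z, (fun k => u - φ (Pi.single k 1)) ⬝ᵥ z = u * ∑ k, z k - φ z := fun z => by
    have hφz : φ z = ∑ k, z k * φ (Pi.single k 1) := by
      conv_lhs => rw [pi_eq_sum_univ' z]
      simp
    simp [dotProduct, hφz, mul_sub, Finset.mul_sum, Finset.sum_sub_distrib, mul_comm]
  refine Or.inr ⟨fun k => u - φ (Pi.single k 1), fun j => or_iff_not_imp_left.2 fun hj => ?_, ?_⟩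
  · have hvj : 0 < ∑ k, v j k := (Finset.sum_nonneg fun k _ => hv j k).lt_of_ne' fun h =>
      hj ((Fintype.sum_eq_zero_iff_of_nonneg (hv j)).1 h)
    have haj := hφK (a j) ⟨Pi.single j 1, single_mem_stdSimplex ℝ j, by simp⟩
    simp only [a, map_smul, smul_eq_mul] at haj
    rw [inv_mul_lt_iff₀ hvj] at haj
    rw [hdot]
    linarith
  · rw [hdot]
    simp only [map_smul, smul_eq_mul] at hφy
    rw [lt_inv_mul_iff₀ hy0] at hφy
    linarith

variable (V : Submodule ℝ (ι → ℝ))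

theorem exists_eq_smul_of_mem_extremePoints_inter_stdSimplex {e y : ι → ℝ}
    (he : e ∈ ((V : Set (ι → ℝ)) ∩ stdSimplex ℝ ι).extremePoints ℝ) (hy : y ∈ V)
    (hzero : ∀ k, e k = 0 → y k = 0) : ∃ μ : ℝ, y = μ • e := by
  obtain ⟨⟨heV, he0, he1⟩, hext⟩ := he
  set w := y - (∑ k, y k) • e
  refine ⟨∑ k, y k, sub_eq_zero.1 ?_⟩
  have hwV : w ∈ V := V.sub_mem hy (V.smul_mem _ heV)
  have hw1 : ∑ k, w k = 0 := by simp [w, Finset.sum_sub_distrib, ← Finset.mul_sum, he1]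
  have hwzero : ∀ k, e k = 0 → w k = 0 := fun k hk => by simp [w, hk, hzero k hk]
  -- `e ± ε • w` stays in the slice for small `ε`, so extremality forces `w = 0`.
  have hev : ∀ᶠ ε in 𝓝 (0 : ℝ), ∀ k, 0 ≤ e k + ε * w k := eventually_all.2 fun k => by
    rcases (he0 k).eq_or_lt with hk | hk
    · simp [← hk, hwzero k hk.symm]
    · refine (Tendsto.eventually_const_lt hk ?_).mono fun _ h => h.le
      exact (by fun_prop : Continuous fun ε : ℝ => e k + ε * w k).tendsto' 0 (e k) (by simp)
  obtain ⟨δ, hδ, hball⟩ := Metric.eventually_nhds_iff.1 hev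
  have hmem : ∀ ε : ℝ, |ε| < δ → e + ε • w ∈ (V : Set (ι → ℝ)) ∩ stdSimplex ℝ ι :=
    fun ε hε => ⟨V.add_mem heV (V.smul_mem _ hwV), fun k => hball (by simpa using hε) k,
      by simp [Finset.sum_add_distrib, ← Finset.mul_sum, he1, hw1]⟩
  have hδ2 : |δ / 2| < δ := by rw [abs_of_pos (by positivity)]; linarith
  have hseg : e ∈ openSegment ℝ (e + (δ / 2) • w) (e + (-(δ / 2)) • w) :=
    ⟨1 / 2, 1 / 2, by norm_num, by norm_num, by norm_num, by module⟩
  have := hext (hmem _ hδ2) (hmem _ (by rwa [abs_neg])) hseg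
  exact (smul_eq_zero.1 (add_eq_left.1 this)).resolve_left (by positivity)

theorem finite_extremePoints_inter_stdSimplex :
    (((V : Set (ι → ℝ)) ∩ stdSimplex ℝ ι).extremePoints ℝ).Finite := by
  refine Set.Finite.of_finite_image (f := fun e => {k | e k = 0}) (Set.toFinite _)
    fun e he e' he' hee => ?_
  obtain ⟨μ, rfl⟩ := exists_eq_smul_of_mem_extremePoints_inter_stdSimplex V he he'.1.1
    fun k hk => (Set.ext_iff.1 hee k).1 hk
  have hμ : μ = 1 := by simpa [← Finset.mul_sum, he.1.2.2] using he'.1.2.2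
  simp [hμ]

theorem exists_nonneg_sum_smul_extremePoints {y : ι → ℝ} (hy : y ∈ V) (hy0 : 0 ≤ y) :
    ∃ l : (ι → ℝ) → ℝ, (∀ e, 0 ≤ l e) ∧
      y = ∑ e ∈ (finite_extremePoints_inter_stdSimplex V).toFinset, l e • e := by
  classical
  set E := (finite_extremePoints_inter_stdSimplex V).toFinset
  have hE : convexHull ℝ (E : Set (ι → ℝ)) = ↑V ∩ stdSimplex ℝ ι := by
    rw [Set.Finite.coe_toFinset,
      ← ((finite_extremePoints_inter_stdSimplex V).isClosed_convexHull ℝ).closure_eq]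
    exact closure_convexHull_extremePoints
      ((isCompact_stdSimplex ℝ ι).inter_left V.closed_of_finiteDimensional)
      (V.convex.inter (convex_stdSimplex ℝ ι))
  rcases (Finset.sum_nonneg fun k _ => hy0 k).eq_or_lt with h0 | h0
  · exact ⟨0, fun _ => le_rfl, by simp [(Fintype.sum_eq_zero_iff_of_nonneg hy0).1 h0.symm]⟩
  have hyE : (∑ k, y k)⁻¹ • y ∈ convexHull ℝ (E : Set (ι → ℝ)) := by
    rw [hE]
    exact ⟨V.smul_mem _ hy, fun k => by simpa using mul_nonneg (inv_nonneg.2 h0.le) (hy0 k),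
      by simp [← Finset.mul_sum, inv_mul_cancel₀ h0.ne']⟩
  obtain ⟨w, hw0, -, hw⟩ := Finset.mem_convexHull'.1 hyE
  refine ⟨fun e => if e ∈ E then (∑ k, y k) * w e else 0,
    fun e => by dsimp only; split_ifs with he; exacts [mul_nonneg h0.le (hw0 e he), le_rfl], ?_⟩
  conv_lhs => rw [← smul_inv_smul₀ h0.ne' y, ← hw, Finset.smul_sum]
  exact Finset.sum_congr rfl fun e he => by simp [he, smul_smul]

end Cone

section

variable {σ : Type*}

theorem isKSos_vanishingIdeal_iff {S : Set (σ → ℝ)} {k : ℕ} {f : MvPolynomial σ ℝ} :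
    IsKSos (vanishingIdeal ℝ S) k f ↔ ∃ (t : ℕ) (h : Fin t → MvPolynomial σ ℝ),
      (∀ j, (h j).totalDegree ≤ k) ∧ ∀ s ∈ S, eval s f = ∑ j, eval s (h j) ^ 2 := by
  simp only [IsKSos, mem_vanishingIdeal_iff, map_sub, map_sum, map_pow, sub_eq_zero]
  rfl

theorem isKSos_vanishingIdeal_of_forall_eval_eq {S : Set (σ → ℝ)} {k : ℕ}
    {f : MvPolynomial σ ℝ} {τ : Type*} [Fintype τ] (h : τ → MvPolynomial σ ℝ)
    (hdeg : ∀ j, (h j).totalDegree ≤ k) (heq : ∀ s ∈ S, eval s f = ∑ j, eval s (h j) ^ 2) :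
    IsKSos (vanishingIdeal ℝ S) k f := by
  refine isKSos_vanishingIdeal_iff.2
    ⟨_, h ∘ (Fintype.equivFin τ).symm, fun j => hdeg _, fun s hs => ?_⟩
  rw [heq s hs, ← (Fintype.equivFin τ).symm.sum_comp]
  rfl

def IsDeterminedByZerosOn (S : Set (σ → ℝ)) (p : MvPolynomial σ ℝ) : Prop :=
  ∀ q : MvPolynomial σ ℝ, q.totalDegree ≤ 1 → (∀ s ∈ S, eval s p = 0 → eval s q = 0) →
    ∃ μ : ℝ, ∀ s ∈ S, eval s q = μ * eval s p

theorem IsDeterminedByZerosOn.exists_eq_zero_or_eq {S : Set (σ → ℝ)} {p : MvPolynomial σ ℝ}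
    (hp : IsDeterminedByZerosOn S p) (hsos : IsKSos (vanishingIdeal ℝ S) 1 p) :
    ∃ c : ℝ, 0 ≤ c ∧ ∀ s ∈ S, eval s p = 0 ∨ eval s p = c := by
  obtain ⟨t, h, hdeg, heq⟩ := isKSos_vanishingIdeal_iff.1 hsos
  have hzero : ∀ j, ∀ s ∈ S, eval s p = 0 → eval s (h j) = 0 := fun j s hs hps =>
    pow_eq_zero_iff two_ne_zero |>.1 <| (Finset.sum_eq_zero_iff_of_nonneg
      fun _ _ => sq_nonneg _).1 ((heq s hs).symm.trans hps) j (Finset.mem_univ j)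
  choose μ hμ using fun j => hp (h j) (hdeg j) (hzero j)
  refine ⟨(∑ j, μ j ^ 2)⁻¹, by positivity, fun s hs => ?_⟩
  have hsq : eval s p = (∑ j, μ j ^ 2) * eval s p ^ 2 := by
    calc eval s p = ∑ j, (μ j * eval s p) ^ 2 := by
          conv_lhs => rw [heq s hs]
          exact Finset.sum_congr rfl fun j _ => by rw [hμ j s hs]
      _ = (∑ j, μ j ^ 2) * eval s p ^ 2 := by simp only [mul_pow, Finset.sum_mul]
  rcases eq_or_ne (eval s p) 0 with h0 | h0
  · exact Or.inl h0
  · refine Or.inr (eq_inv_of_mul_eq_one_right ?_)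
    exact mul_left_cancel₀ h0 (by linear_combination -hsq)

noncomputable def evalOn (S : Set (σ → ℝ)) : MvPolynomial σ ℝ →ₗ[ℝ] (S → ℝ) :=
  LinearMap.pi fun s => (aeval (s : σ → ℝ)).toLinearMap

@[simp]
theorem evalOn_apply (S : Set (σ → ℝ)) (p : MvPolynomial σ ℝ) (s : S) :
    evalOn S p s = eval (s : σ → ℝ) p :=
  rfl

theorem eval_nonneg_of_mem_convexHull {S : Set (σ → ℝ)} {p : MvPolynomial σ ℝ}
    (hp : p.totalDegree ≤ 1) (hS : ∀ s ∈ S, 0 ≤ eval s p) {x : σ → ℝ}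
    (hx : x ∈ convexHull ℝ S) : 0 ≤ eval x p :=
  convexHull_min hS (convex_setOf_nonneg_eval hp) hx

theorem mem_convexHull_of_forall_eval_nonneg [Fintype σ] {S : Set (σ → ℝ)} (hS : S.Finite)
    {x : σ → ℝ} (h : ∀ q : MvPolynomial σ ℝ, q.totalDegree ≤ 1 → (∀ s ∈ S, 0 ≤ eval s q) →
      0 ≤ eval x q) : x ∈ convexHull ℝ S := by
  by_contra hx
  obtain ⟨φ, u, hφS, hφx⟩ :=
    geometric_hahn_banach_closed_point (convex_convexHull ℝ S) (hS.isClosed_convexHull ℝ) hx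
  obtain ⟨q, hq, hqeval⟩ := exists_totalDegree_le_one_eval_eq (-(φ : (σ → ℝ) →ₗ[ℝ] ℝ)) u
  have := h q hq fun s hs => by
    simpa [hqeval] using (hφS s (subset_convexHull ℝ S hs)).le
  simp only [hqeval, LinearMap.neg_apply, ContinuousLinearMap.coe_coe] at this
  linarith

theorem isDeterminedByZerosOn_of_forall_eval_eq_zero {S : Set (σ → ℝ)}
    {p : MvPolynomial σ ℝ} (hp : ∀ s ∈ S, eval s p = 0) : IsDeterminedByZerosOn S p :=
  fun _ _ hq => ⟨0, fun s hs => by simp [hq s hs (hp s hs)]⟩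

theorem exists_affineHull_equations [Finite σ] (S : Set (σ → ℝ)) :
    ∃ (d : ℕ) (w : Fin d → MvPolynomial σ ℝ),
      (∀ i, (w i).totalDegree ≤ 1 ∧ ∀ s ∈ S, eval s (w i) = 0) ∧
      ∀ x, (∀ i, eval x (w i) = 0) → ∀ r : MvPolynomial σ ℝ, r.totalDegree ≤ 1 →
        (∀ s ∈ S, eval s r = 0) → eval x r = 0 := by
  set K := restrictTotalDegree σ ℝ 1 ⊓ (vanishingIdeal ℝ S).restrictScalars ℝ
  set b := Module.finBasis ℝ K
  refine ⟨_, fun i => b i, fun i => ⟨(mem_restrictTotalDegree _ _ _).1 (b i).2.1,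
    fun s hs => (b i).2.2 s hs⟩, fun x hx r hr hrS => ?_⟩
  exact LinearMap.congr_fun (b.ext (f₁ := (aeval x).toLinearMap ∘ₗ K.subtype) (f₂ := 0) hx)
    ⟨r, (mem_restrictTotalDegree _ _ _).2 hr, hrS⟩

theorem exists_finset_isDeterminedByZerosOn_generating (S : Set (σ → ℝ)) [Fintype S] :
    ∃ P : Finset (MvPolynomial σ ℝ),
      (∀ p ∈ P, p.totalDegree ≤ 1 ∧ (∀ s ∈ S, 0 ≤ eval s p) ∧ IsDeterminedByZerosOn S p) ∧
      ∀ q : MvPolynomial σ ℝ, q.totalDegree ≤ 1 → (∀ s ∈ S, 0 ≤ eval s q) →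
        ∃ l : MvPolynomial σ ℝ → ℝ, (∀ p, 0 ≤ l p) ∧
          ∀ s ∈ S, eval s q = ∑ p ∈ P, l p * eval s p := by
  classical
  set V := (restrictTotalDegree σ ℝ 1).map (evalOn S)
  set E := (finite_extremePoints_inter_stdSimplex V).toFinset
  have hlift : ∀ e ∈ E, ∃ p : MvPolynomial σ ℝ, p.totalDegree ≤ 1 ∧ evalOn S p = e :=
    fun e he => by
      obtain ⟨p, hp, rfl⟩ := ((Set.Finite.mem_toFinset _).1 he).1.1
      exact ⟨p, (mem_restrictTotalDegree _ _ _).1 hp, rfl⟩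
  choose! lift hliftdeg hlift using hlift
  refine ⟨E.image lift, Finset.forall_mem_image.2 fun e he => ⟨hliftdeg e he, ?_, ?_⟩, ?_⟩
  · intro s hs
    rw [← evalOn_apply S _ ⟨s, hs⟩, hlift e he]
    exact ((Set.Finite.mem_toFinset _).1 he).1.2.1 _
  · intro q hq hzero
    obtain ⟨μ, hμ⟩ := exists_eq_smul_of_mem_extremePoints_inter_stdSimplex V
      ((Set.Finite.mem_toFinset _).1 he) ⟨q, (mem_restrictTotalDegree _ _ _).2 hq, rfl⟩
      fun s hs => hzero s s.2 (by rw [← evalOn_apply, hlift e he]; exact hs)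
    refine ⟨μ, fun s hs => ?_⟩
    have := congr_fun hμ ⟨s, hs⟩
    rw [← hlift e he] at this
    simpa using this
  · intro q hq hqS
    obtain ⟨l, hl, hql⟩ := exists_nonneg_sum_smul_extremePoints V
      ⟨q, (mem_restrictTotalDegree _ _ _).2 hq, rfl⟩ fun s => hqS s s.2
    refine ⟨fun p => l (evalOn S p), fun p => hl _, fun s hs => ?_⟩
    rw [Finset.sum_image fun e he e' he' h => by rw [← hlift e he, ← hlift e' he', h]]
    have hqs := congr_fun hql ⟨s, hs⟩
    simp only [evalOn_apply, Finset.sum_apply, Pi.smul_apply, smul_eq_mul] at hqs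
    rw [hqs]
    exact Finset.sum_congr rfl fun e he => by
      simp only [← evalOn_apply S _ ⟨s, hs⟩, hlift e he]

theorem exists_finite_description_isDeterminedByZerosOn [Fintype σ] (S : Set (σ → ℝ))
    [Fintype S] : ∃ G : Set (MvPolynomial σ ℝ), G.Finite ∧
      (∀ g ∈ G, g.totalDegree ≤ 1 ∧ IsDeterminedByZerosOn S g) ∧
      convexHull ℝ S = {x | ∀ g ∈ G, 0 ≤ eval x g} := by
  obtain ⟨P, hP, hgen⟩ := exists_finset_isDeterminedByZerosOn_generating S
  obtain ⟨d, w, hw, hwx⟩ := exists_affineHull_equations S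
  have hnegw : ∀ i, (-w i).totalDegree ≤ 1 ∧ ∀ s ∈ S, eval s (-w i) = 0 := fun i =>
    ⟨by simpa using (hw i).1, fun s hs => by simp [(hw i).2 s hs]⟩
  refine ⟨↑P ∪ Set.range w ∪ Set.range (-w),
    (P.finite_toSet.union (Set.finite_range w)).union (Set.finite_range _), ?_, ?_⟩
  · rintro g ((hg | ⟨i, rfl⟩) | ⟨i, rfl⟩)
    · exact ⟨(hP g hg).1, (hP g hg).2.2⟩
    · exact ⟨(hw i).1, isDeterminedByZerosOn_of_forall_eval_eq_zero (hw i).2⟩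
    · exact ⟨(hnegw i).1, isDeterminedByZerosOn_of_forall_eval_eq_zero (hnegw i).2⟩
  refine Set.Subset.antisymm (fun x hx => ?_) (fun x hx => ?_)
  · rintro g ((hg | ⟨i, rfl⟩) | ⟨i, rfl⟩)
    · exact eval_nonneg_of_mem_convexHull (hP g hg).1 (hP g hg).2.1 hx
    · exact eval_nonneg_of_mem_convexHull (hw i).1 (fun s hs => ((hw i).2 s hs).ge) hx
    · exact eval_nonneg_of_mem_convexHull (hnegw i).1 (fun s hs => ((hnegw i).2 s hs).ge) hx
  have hxw : ∀ i, eval x (w i) = 0 := fun i => le_antisymm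
    (by simpa using hx (-w i) (Or.inr ⟨i, rfl⟩)) (hx (w i) (Or.inl (Or.inr ⟨i, rfl⟩)))
  refine mem_convexHull_of_forall_eval_nonneg (Set.toFinite S) fun q hq hqS => ?_
  obtain ⟨l, hl, hql⟩ := hgen q hq hqS
  have hr := hwx x hxw (q - ∑ p ∈ P, l p • p) (by
      rw [← mem_restrictTotalDegree]
      exact Submodule.sub_mem _ ((mem_restrictTotalDegree _ _ _).2 hq) <| Submodule.sum_mem _
        fun p hp => Submodule.smul_mem _ _ ((mem_restrictTotalDegree _ _ _).2 (hP p hp).1))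
    fun s hs => by simp [hql s hs, smul_eq_C_mul]
  simp only [map_sub, map_sum, smul_eq_C_mul, map_mul, eval_C, sub_eq_zero] at hr
  rw [hr]
  exact Finset.sum_nonneg fun p hp => mul_nonneg (hl p) (hx p (Or.inl (Or.inl hp)))

theorem mul_eq_sq_sqrt_div_mul {t c l : ℝ} (hc : 0 ≤ c) (hl : 0 ≤ l) (ht : t = 0 ∨ t = c) :
    l * t = (√(l / c) * t) ^ 2 := by
  rcases ht with rfl | rfl
  · simp
  rw [mul_pow, Real.sq_sqrt (div_nonneg hl hc)]
  rcases hc.eq_or_lt with rfl | hc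
  · simp
  · field_simp

theorem eval_nonneg_of_convexHull_eq {κ : Type*} {S : Set (σ → ℝ)}
    {g : κ → MvPolynomial σ ℝ} (hconv : convexHull ℝ S = {x | ∀ i, 0 ≤ eval x (g i)})
    {s : σ → ℝ} (hs : s ∈ S) (i : κ) : 0 ≤ eval s (g i) := by
  have := subset_convexHull ℝ S hs
  rw [hconv] at this
  exact this i

theorem exists_nonneg_comb_of_convexHull_eq {κ : Type*} [Fintype κ] {S : Set (σ → ℝ)}
    [Fintype S] {g : κ → MvPolynomial σ ℝ} (hdeg : ∀ i, (g i).totalDegree ≤ 1)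
    (hconv : convexHull ℝ S = {x | ∀ i, 0 ≤ eval x (g i)}) {f : MvPolynomial σ ℝ}
    (hf : f.totalDegree ≤ 1) (hfS : ∀ s ∈ S, 0 ≤ eval s f) :
    ∃ a, 0 ≤ a ∧ ∃ l : κ → ℝ, 0 ≤ l ∧ ∀ s ∈ S, eval s f = a + ∑ i, l i * eval s (g i) := by
  have hgS : ∀ i, 0 ≤ evalOn S (g i) := fun i s => eval_nonneg_of_convexHull_eq hconv s.2 i
  set v : Option κ → S → ℝ := fun j => j.elim 1 fun i => evalOn S (g i)
  rcases exists_nonneg_sum_smul_or_exists_dotProduct_neg (v := v)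
    (Option.rec zero_le_one hgS) (y := evalOn S f) (fun s => hfS s s.2) with
    ⟨l, hl, hfl⟩ | ⟨μ, hμv, hμf⟩
  · refine ⟨l none, hl none, fun i => l (some i), fun i => hl _, fun s hs => ?_⟩
    simpa [v, Fintype.sum_option] using congr_fun hfl ⟨s, hs⟩
  exfalso
  rcases isEmpty_or_nonempty S with hS | hS
  · exact hμf.ne (by simp [dotProduct])
  have hμ1 : 0 < μ ⬝ᵥ 1 := (hμv none).resolve_left one_ne_zero
  -- An affine, not necessarily convex, combination of `S` on which every `gᵢ` is nonnegative.
  set x := ∑ s : S, (μ s / μ ⬝ᵥ 1) • (s : σ → ℝ)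
  have heval : ∀ p : MvPolynomial σ ℝ, p.totalDegree ≤ 1 →
      eval x p = μ ⬝ᵥ evalOn S p / μ ⬝ᵥ 1 := fun p hp => by
    rw [eval_sum_smul_of_totalDegree_le_one hp _ _ _
      (by rw [← Finset.sum_div, ← dotProduct_one, div_self hμ1.ne'])]
    simp [dotProduct, Finset.sum_div, div_mul_eq_mul_div]
  have hx : x ∈ convexHull ℝ S := by
    rw [hconv]
    intro i
    rw [heval _ (hdeg i)]
    refine div_nonneg ?_ hμ1.le
    rcases hμv (some i) with h | h
    · rw [show evalOn S (g i) = 0 from h, dotProduct_zero]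
    · exact h.le
  have := eval_nonneg_of_mem_convexHull hf hfS hx
  rw [heval f hf] at this
  exact this.not_gt (div_neg_of_neg_of_pos hμf hμ1)

theorem isExact_of_convexHull_eq {n : ℕ} {κ : Type*} [Fintype κ] {S : Set (Fin n → ℝ)}
    [Fintype S] {g : κ → MvPolynomial (Fin n) ℝ} (hdeg : ∀ i, (g i).totalDegree ≤ 1)
    (hconv : convexHull ℝ S = {x | ∀ i, 0 ≤ eval x (g i)})
    (htwo : ∀ i, ∃ c : ℝ, 0 ≤ c ∧ ∀ s ∈ S, eval s (g i) = 0 ∨ eval s (g i) = c) :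
    IsExact S := by
  intro f hf hfS
  obtain ⟨a, ha, l, hl, hfl⟩ := exists_nonneg_comb_of_convexHull_eq hdeg hconv hf hfS
  choose c hc htwo using htwo
  refine isKSos_vanishingIdeal_of_forall_eval_eq
    (fun j : Option κ => j.elim (C √a) fun i => C √(l i / c i) * g i) ?_ fun s hs => ?_
  · rintro (_ | i)
    · simp
    · exact (totalDegree_mul _ _).trans (by simpa using hdeg i)
  · simp [hfl s hs, Fintype.sum_option, Real.sq_sqrt ha,
      mul_eq_sq_sqrt_div_mul (hc _) (hl _) (htwo _ s hs)]

end

theorem stmt_14_general (n : ℕ) (S : Set (Fin n → ℝ)) (hfin : S.Finite) :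
    IsExact S ↔
    ∃ (m : ℕ) (g : Fin m → MvPolynomial (Fin n) ℝ),
      (∀ i, (g i).totalDegree ≤ 1) ∧
      convexHull ℝ S = {x | ∀ i, 0 ≤ eval x (g i)} ∧
      (∀ i, ∃ c : ℝ, 0 ≤ c ∧ ∀ s ∈ S, eval s (g i) = 0 ∨ eval s (g i) = c) := by
  have := hfin.fintype
  refine ⟨fun hS => ?_, fun ⟨m, g, hdeg, hconv, htwo⟩ => isExact_of_convexHull_eq hdeg hconv htwo⟩
  obtain ⟨G, hGfin, hG, hconv⟩ := exists_finite_description_isDeterminedByZerosOn S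
  obtain ⟨m, g, rfl⟩ := hGfin.fin_embedding
  simp only [Set.forall_mem_range] at hG hconv
  refine ⟨m, g, fun i => (hG i).1, hconv, fun i => (hG i).2.exists_eq_zero_or_eq ?_⟩
  exact hS _ (hG i).1 fun s hs => eval_nonneg_of_convexHull_eq hconv hs i

/-- A nonempty finite set S ⊆ ℝ^n is exact if and only if there is a finite
linear inequality description `conv(S) = {x : g_i(x) ≥ 0, i = 1,...,m}` by degree-≤1
polynomials g_i such that every point of S lies either on the hyperplane g_i = 0 or on a
single parallel translate of it, i.e. g_i takes only the values 0 and some c_i ≥ 0 on S. -/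
theorem stmt_14 (n : ℕ) (S : Set (Fin n → ℝ)) (hfin : S.Finite) (hne : S.Nonempty) :
    IsExact S ↔
    ∃ (m : ℕ) (g : Fin m → MvPolynomial (Fin n) ℝ),
      (∀ i, (g i).totalDegree ≤ 1) ∧
      convexHull ℝ S = {x | ∀ i, 0 ≤ eval x (g i)} ∧
      (∀ i, ∃ c : ℝ, 0 ≤ c ∧ ∀ s ∈ S, eval s (g i) = 0 ∨ eval s (g i) = c) :=
  stmt_14_general n S hfin
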